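/- In the Attacker-Defender game with equal endowments R, the expected equilibrium conflict investments measured as proportions of the endowment converge as R goes to infinity: lim_{R→∞} E(a*)/R = 1 − 2/e for Attacker and lim_{R→∞} E(d*)/R = 1/e for Defender. -/

import Mathlib

/-- The `n`-th harmonic number `H_n = 1 + 1/2 + ... + 1/n` (with `H_0 = 0`). -/
noncomputable def H (n : ℕ) : ℝ := ∑ k ∈ Finset.Icc 1 n, (1 : ℝ) / k

/-- `l` is the upper bound `l*` for endowment `R`:
the unique `1 ≤ l ≤ R - 1` with `H_R - H_{R-l} < 1 < H_R - H_{R-l-1}`. -/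
def IsUpperBound (R l : ℕ) : Prop :=
  1 ≤ l ∧ l ≤ R - 1 ∧ H R - H (R - l) < 1 ∧ 1 < H R - H (R - l - 1)

/-- Attacker's equilibrium mixed strategy (defender endowment `R`, upper bound `l`). -/
noncomputable def astar (R l : ℕ) : ℕ → ℝ := fun i =>
  if i = 0 then ((R : ℝ) - l) / R
  else if i ≤ l then ((R : ℝ) - l) / (((R : ℝ) - i + 1) * ((R : ℝ) - i))
  else 0

/-- Defender's equilibrium mixed strategy (defender endowment `R`, upper bound `l`). -/
noncomputable def dstar (R l : ℕ) : ℕ → ℝ := fun j =>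
  if j < l then 1 / ((R : ℝ) - j)
  else if j = l then 1 - ∑ k ∈ Finset.range l, 1 / ((R : ℝ) - k)
  else 0

/-- Expected conflict investment of a mixed strategy on `{0, ..., R}`. -/
noncomputable def Einv (R : ℕ) (s : ℕ → ℝ) : ℝ := ∑ i ∈ Finset.range (R + 1), (i : ℝ) * s i

/-!
Write `m = R - l*`. The equilibrium formulas give `E(d*) = m (H_R - H_m)` and
`E(a*) = l* - m (H_R - H_m)`, while the defining property of `l*` traps `H_R - H_m` between
`1 - 1/m` and `1`. As `m ≥ H_m > H_R - 1`, `m → ∞`, so `H_R - H_m → 1`. Because `H_n - log n`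
converges (to Euler's constant), this forces `log (R / m) → 1`, i.e. `m / R → 1/e`. Hence
`E(d*)/R → 1/e` and `E(a*)/R = 1 - m/R - E(d*)/R → 1 - 2/e`.
-/

open Filter Topology Finset

lemma H_eq_harmonic (n : ℕ) : H n = harmonic n := by
  simp [H, harmonic_eq_sum_Icc, one_div]

lemma H_le_self (n : ℕ) : H n ≤ n := by
  calc H n ≤ ∑ _k ∈ Icc 1 n, (1 : ℝ) :=
        sum_le_sum fun k hk => div_le_one_of_le₀ (by simpa using (mem_Icc.1 hk).1) k.cast_nonneg
    _ = n := by simp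

lemma H_sub_one {n : ℕ} (hn : n ≠ 0) : H (n - 1) = H n - 1 / n := by
  obtain ⟨k, rfl⟩ := Nat.exists_eq_succ_of_ne_zero hn
  simp [H_eq_harmonic, harmonic_succ]

lemma sum_range_one_div_sub_eq_H_sub_H {R l : ℕ} (h : l ≤ R) :
    ∑ k ∈ range l, 1 / ((R : ℝ) - k) = H R - H (R - l) := by
  induction l with
  | zero => simp
  | succ l ih =>
    rw [sum_range_succ, ih (by omega), show R - (l + 1) = R - l - 1 by omega,
      H_sub_one (by omega), Nat.cast_sub (by omega)]
    ring

lemma tendsto_H_atTop : Tendsto H atTop atTop := by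
  refine tendsto_atTop_mono (fun n => ?_) <|
    Real.tendsto_log_atTop.comp (tendsto_natCast_atTop_atTop.comp (tendsto_add_atTop_nat 1))
  simpa [H_eq_harmonic] using log_add_one_le_harmonic n

lemma tendsto_H_sub_H_sub_log_sub_log {ι : Type*} {p : Filter ι} {a b : ι → ℕ}
    (ha : Tendsto a p atTop) (hb : Tendsto b p atTop) :
    Tendsto (fun i => (H (a i) - H (b i)) - (Real.log (a i) - Real.log (b i))) p (𝓝 0) := by
  have hγ := Real.tendsto_harmonic_sub_log
  simpa [H_eq_harmonic, sub_sub_sub_comm] using (hγ.comp ha).sub (hγ.comp hb)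

lemma tendsto_div_of_tendsto_H_sub_H {ι : Type*} {p : Filter ι} {a b : ι → ℕ}
    (ha : Tendsto a p atTop) (hb : Tendsto b p atTop)
    (hH : Tendsto (fun i => H (a i) - H (b i)) p (𝓝 1)) :
    Tendsto (fun i => (b i : ℝ) / a i) p (𝓝 (Real.exp 1)⁻¹) := by
  have hlog : Tendsto (fun i => Real.log (a i) - Real.log (b i)) p (𝓝 1) := by
    simpa using hH.sub (tendsto_H_sub_H_sub_log_sub_log ha hb)
  rw [← Real.exp_neg]
  refine ((Real.continuous_exp.tendsto _).comp hlog.neg).congr' ?_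
  filter_upwards [ha.eventually_ne_atTop 0, hb.eventually_ne_atTop 0] with i ha0 hb0
  have ha0 : (0 : ℝ) < a i := by positivity
  have hb0 : (0 : ℝ) < b i := by positivity
  simp [neg_sub, ← Real.log_div hb0.ne' ha0.ne', Real.exp_log (div_pos hb0 ha0)]

lemma Einv_eq_sum_range_succ {R l : ℕ} {s : ℕ → ℝ} (hl : l ≤ R) (hs : ∀ i, l < i → s i = 0) :
    Einv R s = ∑ i ∈ range (l + 1), (i : ℝ) * s i := by
  refine (sum_subset (range_subset_range.2 (by omega)) fun i _ hi => ?_).symm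
  rw [hs i (by simpa using hi), mul_zero]

lemma Einv_dstar {R l : ℕ} (h : l < R) :
    Einv R (dstar R l) = ((R : ℝ) - l) * ∑ k ∈ range l, 1 / ((R : ℝ) - k) := by
  rw [Einv_eq_sum_range_succ h.le fun i hi => by simp [dstar, hi.not_gt, hi.ne'], sum_range_succ]
  have hterm : ∀ i ∈ range l, (i : ℝ) * dstar R l i = R * (1 / ((R : ℝ) - i)) - 1 := by
    intro i hi
    have hil : i < l := mem_range.1 hi
    have hiR : (i : ℝ) < R := by exact_mod_cast hil.trans h
    rw [dstar, if_pos hil]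
    field_simp [(sub_pos.2 hiR).ne']
    ring
  rw [sum_congr rfl hterm, sum_sub_distrib, ← mul_sum]
  simp only [one_div, sum_const, card_range, nsmul_eq_mul, mul_one, dstar, lt_self_iff_false,
    ↓reduceIte]
  ring

lemma Einv_astar {R l : ℕ} (h : l < R) :
    Einv R (astar R l) = l - ((R : ℝ) - l) * ∑ k ∈ range l, 1 / ((R : ℝ) - k) := by
  rw [Einv_eq_sum_range_succ h.le fun i hi => by
    simp [astar, hi.not_ge, (l.zero_le.trans_lt hi).ne'], sum_range_succ']
  -- `i a_i` telescopes: `(i+1) a_{i+1} = (R - l) (u (i+1) - u i - 1/(R-i))` with `u i = i/(R-i)`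
  have hterm : ∀ i ∈ range l, ((i + 1 : ℕ) : ℝ) * astar R l (i + 1) =
      ((R : ℝ) - l) * (((i + 1 : ℕ) : ℝ) / (R - (i + 1 : ℕ)) - i / (R - i)) -
        ((R : ℝ) - l) * (1 / ((R : ℝ) - i)) := by
    intro i hi
    have hil : i + 1 ≤ l := mem_range.1 hi
    have hiR : (i : ℝ) + 1 < R := by exact_mod_cast hil.trans_lt h
    rw [astar, if_neg i.succ_ne_zero, if_pos hil]
    push_cast
    rw [show (R : ℝ) - (i + 1) + 1 = R - i by ring]
    have h1 : (R : ℝ) - (i + 1) ≠ 0 := by linarith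
    have h2 : (R : ℝ) - i ≠ 0 := by linarith
    field_simp
    ring
  have hRl : (R : ℝ) - l ≠ 0 := sub_ne_zero.2 (by exact_mod_cast h.ne')
  rw [sum_congr rfl hterm, sum_sub_distrib, ← mul_sum, ← mul_sum,
    sum_range_sub (fun i : ℕ => (i : ℝ) / (R - i))]
  field_simp
  simp

namespace IsUpperBound

variable {R l : ℕ}

lemma lt (h : IsUpperBound R l) : l < R := by
  obtain ⟨h1, h2, -⟩ := h
  omega

lemma H_sub_H_lt_one (h : IsUpperBound R l) : H R - H (R - l) < 1 := h.2.2.1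

lemma one_sub_inv_lt_H_sub_H (h : IsUpperBound R l) :
    1 - 1 / ((R - l : ℕ) : ℝ) < H R - H (R - l) := by
  have h' := h.2.2.2
  rw [H_sub_one (by have := h.lt; omega)] at h'
  linarith

end IsUpperBound

lemma tendsto_sub_atTop_of_isUpperBound {L : ℕ → ℕ} (hL : ∀ R, 2 ≤ R → IsUpperBound R (L R)) :
    Tendsto (fun R => R - L R) atTop atTop := by
  refine tendsto_natCast_atTop_iff.1 <| tendsto_atTop_mono' _ ?_
    (tendsto_atTop_add_const_right _ (-1) tendsto_H_atTop)
  filter_upwards [eventually_ge_atTop 2] with R hR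
  linarith [(hL R hR).H_sub_H_lt_one, H_le_self (R - L R)]

lemma tendsto_H_sub_H_of_isUpperBound {L : ℕ → ℕ} (hL : ∀ R, 2 ≤ R → IsUpperBound R (L R)) :
    Tendsto (fun R => H R - H (R - L R)) atTop (𝓝 1) := by
  have hinv : Tendsto (fun R => 1 - 1 / ((R - L R : ℕ) : ℝ)) atTop (𝓝 1) := by
    simpa using (tendsto_const_nhds (x := (1 : ℝ))).sub <| tendsto_one_div_atTop_nhds_zero_nat.comp
      (tendsto_sub_atTop_of_isUpperBound hL)
  refine tendsto_of_tendsto_of_tendsto_of_le_of_le' hinv tendsto_const_nhds ?_ ?_ <;>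
    filter_upwards [eventually_ge_atTop 2] with R hR
  exacts [(hL R hR).one_sub_inv_lt_H_sub_H.le, (hL R hR).H_sub_H_lt_one.le]

/-- Expected equilibrium conflict investments, as shares of the endowment, converge to
`1 - 2/e` for Attacker and `1/e` for Defender. -/
theorem expected_investment_shares_tendsto (L : ℕ → ℕ)
    (hL : ∀ R, 2 ≤ R → IsUpperBound R (L R)) :
    Filter.Tendsto (fun R : ℕ => Einv R (astar R (L R)) / R) Filter.atTop
      (nhds (1 - 2 / Real.exp 1)) ∧
    Filter.Tendsto (fun R : ℕ => Einv R (dstar R (L R)) / R) Filter.atTop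
      (nhds (1 / Real.exp 1)) := by
  have hg := tendsto_H_sub_H_of_isUpperBound hL
  have hf : Tendsto (fun R => ((R - L R : ℕ) : ℝ) / R) atTop (𝓝 (1 / Real.exp 1)) := by
    simpa using tendsto_div_of_tendsto_H_sub_H tendsto_id (tendsto_sub_atTop_of_isUpperBound hL) hg
  have hfg := hf.mul hg
  have hlt : ∀ᶠ R in atTop, L R < R ∧ (R : ℝ) ≠ 0 := by
    filter_upwards [eventually_ge_atTop 2] with R hR
    exact ⟨(hL R hR).lt, by positivity⟩
  constructor
  · refine Tendsto.congr' (hlt.mono fun R ⟨h, hR⟩ => ?_) <| by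
      simpa [sub_sub, ← two_mul, div_eq_mul_inv] using
        ((tendsto_const_nhds (x := (1 : ℝ))).sub hf).sub hfg
    simp only [Einv_astar h, sum_range_one_div_sub_eq_H_sub_H h.le, Nat.cast_sub h.le]
    field_simp
    ring
  · refine Tendsto.congr' (hlt.mono fun R ⟨h, hR⟩ => ?_) (by simpa using hfg)
    simp only [Einv_dstar h, sum_range_one_div_sub_eq_H_sub_H h.le, Nat.cast_sub h.le]
    ring
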